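/- arXiv:2106.10808 — 4 statements merged into one kernel-verified Lean document; each statement's English description precedes it below -/
import Mathlib

section
/- For every real symmetric positive definite 3×3 matrix X, the trace of A(X) equals 1/√(det X); that is, tr( (1/2)·∫₀^∞ (X + s·I)⁻¹ / √(det(X + s·I)) ds ) = (det X)^(−1/2). -/
open Matrix MeasureTheory

noncomputable section

/-- 3×3 real matrices. -/
abbrev Mat3 := Matrix (Fin 3) (Fin 3) ℝ

/-- Rank-4 tensors on ℝ³. -/
abbrev Tens4 := Fin 3 → Fin 3 → Fin 3 → Fin 3 → ℝ

/-- Tensor (outer) product of two matrices: `(K ⊗ L)_{ijkl} = K_{ij} L_{kl}`. -/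
def otimes (K L : Mat3) : Tens4 := fun i j k l => K i j * L k l

/-- Symmetrization of a rank-4 tensor: the average over all 24 permutations of the indices. -/
def symmetrize (T : Tens4) : Tens4 := fun i j k l =>
  (∑ σ : Equiv.Perm (Fin 4),
      T (![i, j, k, l] (σ 0)) (![i, j, k, l] (σ 1)) (![i, j, k, l] (σ 2)) (![i, j, k, l] (σ 3)))
    / 24

/-- Contraction of a rank-4 tensor with a matrix: `(𝔹:M)_{ij} = Σ_{k,l} 𝔹_{ijkl} M_{kl}`. -/
def contr (T : Tens4) (M : Mat3) : Mat3 :=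
  Matrix.of fun i j => ∑ k, ∑ l, T i j k l * M k l

/-- Full contraction `N:𝔹:M = Σ_{i,j,k,l} N_{ij} 𝔹_{ijkl} M_{kl}`. -/
def dcontr (N : Mat3) (T : Tens4) (M : Mat3) : ℝ :=
  ∑ i, ∑ j, ∑ k, ∑ l, N i j * T i j k l * M k l

/-- The matrix `(B + s·I)⁻¹` (matrix inverse). -/
def res (B : Mat3) (s : ℝ) : Mat3 := (B + s • (1 : Mat3))⁻¹

/-- `A(B) = (1/2)·∫₀^∞ (B + s·I)⁻¹ / √(det(B + s·I)) ds`, entrywise. -/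
def Amat (B : Mat3) : Mat3 :=
  Matrix.of fun i j =>
    (1 / 2) * ∫ s in Set.Ioi (0 : ℝ),
      res B s i j / Real.sqrt (B + s • (1 : Mat3)).det

/-- `𝔸(B) = (3/4)·∫₀^∞ s·S((B+sI)⁻¹ ⊗ (B+sI)⁻¹) / √(det(B+sI)) ds`, entrywise. -/
def Atens (B : Mat3) : Tens4 := fun i j k l =>
  (3 / 4) * ∫ s in Set.Ioi (0 : ℝ),
    s * symmetrize (otimes (res B s) (res B s)) i j k l
      / Real.sqrt (B + s • (1 : Mat3)).det

/-- `ℂ(B) = (3/4)·∫₀^∞ S((B+sI)⁻¹ ⊗ (B+sI)⁻¹) / √(det(B+sI)) ds`, entrywise. -/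
def Ctens (B : Mat3) : Tens4 := fun i j k l =>
  (3 / 4) * ∫ s in Set.Ioi (0 : ℝ),
    symmetrize (otimes (res B s) (res B s)) i j k l
      / Real.sqrt (B + s • (1 : Mat3)).det

end


/-!
By Jacobi's formula, `d/ds det (X + s I) = det (X + s I) · tr (X + s I)⁻¹`, so
`tr (X + s I)⁻¹ / √(det (X + s I))` is the derivative of `-2 / √(det (X + s I))`. The determinant
`det (X + s I)` is a monic polynomial in `s` of positive degree, so this primitive tends to `0` at
infinity, and the integral over `(0, ∞)` equals `2 / √(det X)`. For positive definite `X` the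
integrand is positive, which gives integrability; the diagonal entries of `(X + s I)⁻¹` are positive
and dominated by its trace, which makes the entrywise integrals in `Amat` genuine.
-/

open Filter Polynomial Set Topology

namespace Matrix

variable {n : Type*} [Fintype n] [DecidableEq n]

theorem eval_charpoly_neg {R : Type*} [CommRing R] (X : Matrix n n R) (s : R) :
    (-X).charpoly.eval s = (X + s • (1 : Matrix n n R)).det := by
  rw [charpoly, ← coe_evalRingHom, RingHom.map_det]
  congr 1
  ext i j
  by_cases h : i = j <;> simp [h, add_comm]

section Jacobi

variable {𝕜 : Type*} [NontriviallyNormedField 𝕜]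

theorem hasDerivAt_det_one_add_smul (N : Matrix n n 𝕜) :
    HasDerivAt (fun t : 𝕜 => (1 + t • N).det) N.trace 0 := by
  have hp := (det (1 + (X : 𝕜[X]) • N.map C)).hasDerivAt 0
  rw [derivative_det_one_add_X_smul] at hp
  convert hp using 2 with t
  rw [← coe_evalRingHom, RingHom.map_det]
  congr 1
  ext i j
  by_cases h : i = j <;> simp [h] <;> ring

theorem hasDerivAt_det_add_smul_one (X : Matrix n n 𝕜) {s : 𝕜} (hs : IsUnit (X + s • 1).det) :
    HasDerivAt (fun t : 𝕜 => (X + t • 1).det) ((X + s • 1).det * (X + s • 1)⁻¹.trace) s := by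
  set M := X + s • (1 : Matrix n n 𝕜)
  have hfactor : ∀ t : 𝕜, X + t • 1 = M * (1 + (t - s) • M⁻¹) := by
    intro t
    rw [mul_add, mul_one, mul_smul_comm, mul_nonsing_inv _ hs, sub_smul]
    simp only [M]
    abel
  simp_rw [hfactor, det_mul]
  have hshift : HasDerivAt (fun u : 𝕜 => (1 + u • M⁻¹).det) M⁻¹.trace (s - s) := by
    rw [sub_self]
    exact hasDerivAt_det_one_add_smul M⁻¹
  exact (hshift.comp_sub_const s s).const_mul _

end Jacobi

theorem tendsto_det_add_smul_one_atTop [Nonempty n] (X : Matrix n n ℝ) :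
    Tendsto (fun s : ℝ => (X + s • 1).det) atTop atTop := by
  have hmonic := (-X).charpoly_monic
  simp_rw [← eval_charpoly_neg]
  refine tendsto_atTop_of_leadingCoeff_nonneg _ ?_ (hmonic.leadingCoeff ▸ zero_le_one)
  rw [degree_eq_natDegree hmonic.ne_zero, charpoly_natDegree_eq_dim]
  exact_mod_cast Fintype.card_pos

theorem tendsto_neg_two_div_sqrt_det_add_smul_one [Nonempty n] (X : Matrix n n ℝ) :
    Tendsto (fun s : ℝ => -2 / √(X + s • 1).det) atTop (𝓝 0) :=
  (Real.tendsto_sqrt_atTop.comp (tendsto_det_add_smul_one_atTop X)).const_div_atTop _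

theorem hasDerivAt_neg_two_div_sqrt_det_add_smul_one (X : Matrix n n ℝ) {s : ℝ}
    (hs : 0 < (X + s • 1).det) :
    HasDerivAt (fun t : ℝ => -2 / √(X + t • 1).det)
      ((X + s • 1)⁻¹.trace / √(X + s • 1).det) s := by
  have hsqrt := (hasDerivAt_det_add_smul_one X hs.ne'.isUnit).sqrt hs.ne'
  refine (((hsqrt.inv (Real.sqrt_pos.2 hs).ne').const_mul (-2)).congr_deriv ?_)
    |>.congr_of_eventuallyEq (.of_forall fun t => div_eq_mul_inv _ _)
  rw [Real.sq_sqrt hs.le]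
  field_simp

theorem measurable_inv_add_smul_one_apply_div_sqrt_det (X : Matrix n n ℝ) (i j : n) :
    Measurable fun s : ℝ => (X + s • 1)⁻¹ i j / √(X + s • 1).det := by
  simp_rw [inv_def, Ring.inverse_eq_inv', smul_apply, smul_eq_mul]
  have hcont : Continuous fun s : ℝ => X + s • (1 : Matrix n n ℝ) := by fun_prop
  exact (hcont.matrix_det.measurable.inv.mul (hcont.matrix_adjugate.matrix_elem i j).measurable).div
    hcont.matrix_det.measurable.sqrt

namespace PosDef

variable {X : Matrix n n ℝ}

omit [Fintype n] in
theorem add_smul_one (hX : X.PosDef) {s : ℝ} (hs : 0 ≤ s) : (X + s • 1).PosDef :=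
  hX.add_posSemidef (PosSemidef.one.smul hs)

theorem trace_inv_add_smul_one_div_sqrt_det_nonneg [Nonempty n] (hX : X.PosDef) {s : ℝ}
    (hs : 0 ≤ s) : 0 ≤ (X + s • 1)⁻¹.trace / √(X + s • 1).det :=
  div_nonneg (hX.add_smul_one hs).inv.trace_pos.le (Real.sqrt_nonneg _)

theorem integrableOn_trace_inv_add_smul_one_div_sqrt_det [Nonempty n] (hX : X.PosDef) :
    IntegrableOn (fun s : ℝ => (X + s • 1)⁻¹.trace / √(X + s • 1).det) (Ioi 0) :=
  integrableOn_Ioi_deriv_of_nonneg'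
    (fun _ hs => hasDerivAt_neg_two_div_sqrt_det_add_smul_one X (hX.add_smul_one hs).det_pos)
    (fun _ hs => hX.trace_inv_add_smul_one_div_sqrt_det_nonneg (le_of_lt hs))
    (tendsto_neg_two_div_sqrt_det_add_smul_one X)

theorem integral_trace_inv_add_smul_one_div_sqrt_det [Nonempty n] (hX : X.PosDef) :
    ∫ s in Ioi (0 : ℝ), (X + s • 1)⁻¹.trace / √(X + s • 1).det = 2 / √X.det := by
  rw [integral_Ioi_of_hasDerivAt_of_nonneg'
      (fun _ hs => hasDerivAt_neg_two_div_sqrt_det_add_smul_one X (hX.add_smul_one hs).det_pos)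
      (fun _ hs => hX.trace_inv_add_smul_one_div_sqrt_det_nonneg (le_of_lt hs))
      (tendsto_neg_two_div_sqrt_det_add_smul_one X)]
  simp [neg_div]

theorem integrableOn_inv_add_smul_one_apply_self_div_sqrt_det (hX : X.PosDef) (i : n) :
    IntegrableOn (fun s : ℝ => (X + s • 1)⁻¹ i i / √(X + s • 1).det) (Ioi 0) := by
  have : Nonempty n := ⟨i⟩
  refine hX.integrableOn_trace_inv_add_smul_one_div_sqrt_det.mono'
    (X.measurable_inv_add_smul_one_apply_div_sqrt_det i i).aestronglyMeasurable ?_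
  refine (ae_restrict_iff' measurableSet_Ioi).2 (.of_forall fun s hs => ?_)
  have hinv := (hX.add_smul_one (le_of_lt hs)).inv
  rw [Real.norm_of_nonneg (div_nonneg hinv.diag_pos.le (Real.sqrt_nonneg _))]
  gcongr
  exact Finset.single_le_sum (f := fun j => (X + s • 1)⁻¹ j j) (fun j _ => hinv.diag_pos.le)
    (Finset.mem_univ i)

end PosDef

end Matrix

theorem trace_Amat_eq_inv_sqrt_det (X : Mat3) (hX : X.PosDef) :
    (Amat X).trace = 1 / Real.sqrt X.det := by
  calc (Amat X).trace
      = 1 / 2 * ∑ i, ∫ s in Ioi (0 : ℝ), (X + s • 1)⁻¹ i i / √(X + s • 1).det := by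
        simp only [trace, diag, Amat, res, of_apply, Finset.mul_sum]
    _ = 1 / 2 * ∫ s in Ioi (0 : ℝ), (X + s • 1)⁻¹.trace / √(X + s • 1).det := by
        rw [← integral_finsetSum _ fun i _ =>
          hX.integrableOn_inv_add_smul_one_apply_self_div_sqrt_det i]
        simp only [trace, diag, Finset.sum_div]
    _ = 1 / √X.det := by
        rw [hX.integral_trace_inv_add_smul_one_div_sqrt_det]
        ring
end

section
/- For any invertible real symmetric 3×3 matrix K and any real 3×3 matrix M, S(K⁻¹⊗K⁻¹):(K·M) = S(K⁻¹⊗K⁻¹):(Mᵀ·K) = (1/3)·((tr M)·K⁻¹ + M·K⁻¹ + K⁻¹·Mᵀ). -/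
open Matrix MeasureTheory

section Aux

lemma sum_perm_succ_aux {n : ℕ} (g : Equiv.Perm (Fin (n+1)) → ℝ) :
    ∑ σ, g σ = ∑ p : Fin (n+1) × Equiv.Perm (Fin n), g (Equiv.Perm.decomposeFin.symm p) :=
  (Equiv.sum_comp _ g).symm

lemma perm4_sum_aux (f : Fin 4 → Fin 4 → Fin 4 → Fin 4 → ℝ) :
    ∑ σ : Equiv.Perm (Fin 4), f (σ 0) (σ 1) (σ 2) (σ 3) =
      f 0 1 2 3 + f 0 1 3 2 + f 0 2 1 3 + f 0 2 3 1 + f 0 3 1 2 + f 0 3 2 1 +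
      f 1 0 2 3 + f 1 0 3 2 + f 1 2 0 3 + f 1 2 3 0 + f 1 3 0 2 + f 1 3 2 0 +
      f 2 0 1 3 + f 2 0 3 1 + f 2 1 0 3 + f 2 1 3 0 + f 2 3 0 1 + f 2 3 1 0 +
      f 3 0 1 2 + f 3 0 2 1 + f 3 1 0 2 + f 3 1 2 0 + f 3 2 0 1 + f 3 2 1 0 := by
  simp_rw [sum_perm_succ_aux, Fintype.sum_prod_type]
  simp_rw [sum_perm_succ_aux, Fintype.sum_prod_type]
  simp_rw [sum_perm_succ_aux, Fintype.sum_prod_type]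
  simp only [Finset.univ_unique, Finset.sum_singleton, Fin.sum_univ_succ, Fin.sum_univ_zero]
  simp only [show (1:Fin 4) = Fin.succ 0 from rfl, show (2:Fin 4) = Fin.succ 1 from rfl,
    show (3:Fin 4) = Fin.succ 2 from rfl, show (1:Fin 3) = Fin.succ 0 from rfl,
    show (2:Fin 3) = Fin.succ 1 from rfl, show (1:Fin 2) = Fin.succ 0 from rfl,
    show (default : Equiv.Perm (Fin 1)) = 1 from Subsingleton.elim _ _,
    show (default : Fin 1) = 0 from rfl, show (default : Fin 2) = 0 from rfl,
    show (default : Fin 3) = 0 from rfl,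
    Equiv.Perm.decomposeFin_symm_apply_zero, Equiv.Perm.decomposeFin_symm_apply_succ,
    Equiv.Perm.decomposeFin_symm_apply_one, Equiv.Perm.one_apply]
  simp only [Equiv.swap_apply_def, Fin.ext_iff, Fin.val_succ, Fin.val_zero, Fin.isValue]
  norm_num
  ring

lemma symm_form_aux (A : Mat3) (hA : Aᵀ = A) (i j k l : Fin 3) :
    symmetrize (otimes A A) i j k l
      = (A i j * A k l + A i k * A j l + A i l * A j k) / 3 := by
  have hs : ∀ x y : Fin 3, A y x = A x y := fun x y =>
    (Matrix.transpose_apply A x y).symm.trans (congrFun (congrFun hA x) y)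
  unfold symmetrize otimes
  rw [perm4_sum_aux (fun a b c d => A (![i,j,k,l] a) (![i,j,k,l] b) * A (![i,j,k,l] c) (![i,j,k,l] d))]
  simp only [show ![i,j,k,l] 0 = i from rfl, show ![i,j,k,l] 1 = j from rfl,
    show ![i,j,k,l] 2 = k from rfl, show ![i,j,k,l] 3 = l from rfl]
  rw [hs i j, hs i k, hs i l, hs j k, hs j l, hs k l]
  ring

lemma contr_symm_aux (A N : Mat3) (hA : Aᵀ = A) :
    contr (symmetrize (otimes A A)) N
      = (1/3 : ℝ) • ((Aᵀ*N).trace • A + A*N*Aᵀ + A*Nᵀ*Aᵀ) := by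
  ext i j
  simp only [contr, Matrix.of_apply, symm_form_aux A hA, Matrix.smul_apply, Matrix.add_apply,
    Matrix.mul_apply, Matrix.trace, Matrix.diag_apply, Matrix.transpose_apply, smul_eq_mul,
    Fin.sum_univ_succ, Fin.sum_univ_zero]
  ring

end Aux

theorem symmetrize_otimes_inv_contract (K M : Mat3) (hK : Kᵀ = K) (hKdet : IsUnit K.det) :
    contr (symmetrize (otimes K⁻¹ K⁻¹)) (K * M)
        = (1 / 3 : ℝ) • (M.trace • K⁻¹ + M * K⁻¹ + K⁻¹ * Mᵀ)
      ∧ contr (symmetrize (otimes K⁻¹ K⁻¹)) (Mᵀ * K)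
        = (1 / 3 : ℝ) • (M.trace • K⁻¹ + M * K⁻¹ + K⁻¹ * Mᵀ) := by
  have hAinv : (K⁻¹)ᵀ = K⁻¹ := by rw [Matrix.transpose_nonsing_inv, hK]
  have hik : K⁻¹ * K = 1 := Matrix.nonsing_inv_mul K hKdet
  have hki : K * K⁻¹ = 1 := Matrix.mul_nonsing_inv K hKdet
  constructor
  · rw [contr_symm_aux _ _ hAinv, hAinv,
      show K⁻¹ * (K * M) = M by rw [← Matrix.mul_assoc, hik, Matrix.one_mul],
      show K⁻¹ * (K * M)ᵀ * K⁻¹ = K⁻¹ * Mᵀ by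
        simp only [Matrix.transpose_mul, hK, Matrix.mul_assoc, hki, Matrix.mul_one]]
  · rw [contr_symm_aux _ _ hAinv, hAinv,
      show (K⁻¹ * (Mᵀ * K)).trace = M.trace by
        rw [Matrix.trace_mul_comm, Matrix.mul_assoc, hki, Matrix.mul_one, Matrix.trace_transpose],
      show K⁻¹ * (Mᵀ * K) * K⁻¹ = K⁻¹ * Mᵀ by
        simp only [Matrix.mul_assoc, hki, Matrix.mul_one],
      show K⁻¹ * (Mᵀ * K)ᵀ * K⁻¹ = M * K⁻¹ by
        simp only [Matrix.transpose_mul, Matrix.transpose_transpose, hK, ← Matrix.mul_assoc,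
          hik, Matrix.one_mul],
      add_right_comm]
end

section
/- Let B be a real symmetric positive definite 3×3 matrix and let M be any real 3×3 matrix. Then ℂ(B):(B·M + Mᵀ·B) = (tr M)·A(B) + M·A(B) + A(B)·Mᵀ − 2·𝔸(B):M. -/
open Matrix MeasureTheory

/-!
For symmetric `R` the symmetrized square contracts as
`S(R ⊗ R) : N = (tr(R Nᵀ) R + R N R + R Nᵀ R) / 3`. Taking `R = (B + sI)⁻¹`, so that
`R B = B R = I - s R`, this gives, pointwise in `s`,
`S(R ⊗ R) : (B M + Mᵀ B) + 2 s S(R ⊗ R) : M = (2/3) (tr M R + M R + R Mᵀ)`,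
and the theorem is this identity integrated against `(3/4) det(B + sI)^(-1/2) ds`.
Diagonalising `B` shows that all integrands are `O((s + λ_min)^(-5/2))`, so the integrals
converge and can be treated as Bochner integrals of matrix- and tensor-valued functions, on
which the linear operations of the statement commute with integration.
-/

open Set

lemma sum_perm_fin_succ {α : Type*} [AddCommMonoid α] {n : ℕ} (g : Equiv.Perm (Fin (n + 1)) → α) :
    ∑ σ, g σ = ∑ i, ∑ τ : Equiv.Perm (Fin n), g (Equiv.Perm.decomposeFin.symm (i, τ)) := by
  rw [← Equiv.sum_comp Equiv.Perm.decomposeFin.symm g, Fintype.sum_prod_type]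

open Equiv.Perm in
lemma symmetrize_otimes_self_apply {R : Mat3} (hR : R.IsSymm) (i j k l : Fin 3) :
    symmetrize (otimes R R) i j k l
      = (R i j * R k l + R i k * R j l + R i l * R j k) / 3 := by
  have hR' (a b : Fin 3) : R b a = R a b := hR.apply a b
  simp only [symmetrize, otimes, sum_perm_fin_succ, Fin.sum_univ_succ,
    Finset.univ_unique, Finset.sum_singleton,
    show (3 : Fin 4) = Fin.succ 2 from rfl, show (2 : Fin 4) = Fin.succ 1 from rfl,
    show (2 : Fin 3) = Fin.succ 1 from rfl,
    decomposeFin_symm_apply_zero, decomposeFin_symm_apply_one, decomposeFin_symm_apply_succ]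
  simp +decide only [Equiv.swap_apply_def, Fin.succ]
  norm_num [Equiv.swap_apply_def, Fin.ext_iff]
  simp only [hR' j i, hR' k i, hR' l i, hR' k j, hR' l j, hR' l k]
  ring

lemma contr_symmetrize_otimes_self {R : Mat3} (hR : R.IsSymm) (N : Mat3) :
    contr (symmetrize (otimes R R)) N
      = (1 / 3 : ℝ) • ((R * Nᵀ).trace • R + R * N * R + R * Nᵀ * R) := by
  have hRNR (X : Mat3) : R * X * R = R * X * Rᵀ := by rw [hR.eq]
  rw [hRNR, hRNR]
  ext i j
  simp only [contr, of_apply, symmetrize_otimes_self_apply hR, Matrix.smul_apply, Matrix.add_apply,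
    mul_apply, trace, diag, transpose_apply, smul_eq_mul, Fin.sum_univ_three]
  ring

lemma isSymm_res {B : Mat3} (hB : B.IsSymm) (s : ℝ) : (res B s).IsSymm := by
  rw [IsSymm, res, transpose_nonsing_inv, transpose_add, hB.eq, transpose_smul, transpose_one]

lemma Matrix.IsSymm.trace_mul_transpose {n α : Type*} [Fintype n] [CommSemiring α]
    {R : Matrix n n α} (hR : R.IsSymm) (M : Matrix n n α) :
    (R * Mᵀ).trace = (R * M).trace := by
  rw [← trace_transpose (R * M), transpose_mul, hR.eq, trace_mul_comm]

lemma contr_symmetrize_otimes_res {B : Mat3} (hB : B.IsSymm) {s : ℝ}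
    (hs : IsUnit (B + s • (1 : Mat3)).det) (M : Mat3) :
    contr (symmetrize (otimes (res B s) (res B s))) (B * M + Mᵀ * B)
        + (2 * s) • contr (symmetrize (otimes (res B s) (res B s))) M
      = (2 / 3 : ℝ) • (M.trace • res B s + M * res B s + res B s * Mᵀ) := by
  set R := res B s
  have hR : R.IsSymm := isSymm_res hB s
  have hRB : R * B = 1 - s • R := by
    have h := nonsing_inv_mul _ hs
    rwa [Matrix.mul_add, Matrix.mul_smul, Matrix.mul_one, ← eq_sub_iff_add_eq] at h
  have hBR : B * R = 1 - s • R := by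
    have h := mul_nonsing_inv _ hs
    rwa [Matrix.add_mul, Matrix.smul_mul, Matrix.one_mul, ← eq_sub_iff_add_eq] at h
  have hN : (B * M + Mᵀ * B)ᵀ = B * M + Mᵀ * B := by
    rw [transpose_add, transpose_mul, transpose_mul, transpose_transpose, hB.eq, add_comm]
  have htr : (R * (B * M + Mᵀ * B)).trace = 2 * M.trace - 2 * s * (R * Mᵀ).trace := by
    rw [Matrix.mul_add, ← Matrix.mul_assoc, hRB, trace_add, ← Matrix.mul_assoc,
      trace_mul_cycle, hBR]
    simp only [Matrix.sub_mul, Matrix.one_mul, Matrix.smul_mul, trace_sub, trace_smul,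
      trace_transpose, smul_eq_mul]
    rw [hR.trace_mul_transpose]
    ring
  have hRNR : R * (B * M + Mᵀ * B) * R
      = M * R + R * Mᵀ - s • (R * M * R + R * Mᵀ * R) := by
    rw [Matrix.mul_add, Matrix.add_mul, ← Matrix.mul_assoc, hRB, ← Matrix.mul_assoc,
      Matrix.mul_assoc (R * Mᵀ), hBR]
    simp only [Matrix.sub_mul, Matrix.mul_sub, Matrix.smul_mul, Matrix.mul_smul, Matrix.one_mul,
      Matrix.mul_one]
    module
  rw [contr_symmetrize_otimes_self hR, contr_symmetrize_otimes_self hR, hN, htr, hRNR]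
  module

namespace Matrix

variable {n : Type*} [Fintype n] [DecidableEq n] {A : Matrix n n ℝ}

lemma IsHermitian.add_smul_one_eq (hA : A.IsHermitian) (s : ℝ) :
    A + s • (1 : Matrix n n ℝ) = (hA.eigenvectorUnitary : Matrix n n ℝ)
      * diagonal (fun i => hA.eigenvalues i + s) * star (hA.eigenvectorUnitary : Matrix n n ℝ) := by
  have hdiag : diagonal (fun i => hA.eigenvalues i + s)
      = diagonal (RCLike.ofReal ∘ hA.eigenvalues) + s • (1 : Matrix n n ℝ) := by
    rw [smul_one_eq_diagonal, diagonal_add]; rfl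
  conv_lhs => rw [hA.spectral_theorem, Unitary.conjStarAlgAut_apply]
  rw [hdiag, Matrix.mul_add, Matrix.add_mul, Matrix.mul_smul, Matrix.mul_one, Matrix.smul_mul,
    Unitary.mul_star_self_of_mem hA.eigenvectorUnitary.2]

lemma IsHermitian.det_add_smul_one (hA : A.IsHermitian) (s : ℝ) :
    (A + s • (1 : Matrix n n ℝ)).det = ∏ i, (hA.eigenvalues i + s) := by
  rw [hA.add_smul_one_eq, det_mul, det_mul, mul_right_comm, ← det_mul,
    Unitary.mul_star_self_of_mem hA.eigenvectorUnitary.2, det_one, one_mul, det_diagonal]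

lemma IsHermitian.inv_add_smul_one_eq (hA : A.IsHermitian) {s : ℝ}
    (hs : ∀ i, hA.eigenvalues i + s ≠ 0) :
    (A + s • (1 : Matrix n n ℝ))⁻¹ = (hA.eigenvectorUnitary : Matrix n n ℝ)
      * diagonal (fun i => (hA.eigenvalues i + s)⁻¹)
      * star (hA.eigenvectorUnitary : Matrix n n ℝ) := by
  refine inv_eq_left_inv ?_
  rw [hA.add_smul_one_eq]
  simp only [Matrix.mul_assoc]
  rw [← Matrix.mul_assoc (star _) _ (diagonal _ * _),
    Unitary.star_mul_self_of_mem hA.eigenvectorUnitary.2, Matrix.one_mul,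
    ← Matrix.mul_assoc (diagonal _), diagonal_mul_diagonal]
  simp only [inv_mul_cancel₀ (hs _), diagonal_one, Matrix.one_mul]
  exact Unitary.mul_star_self_of_mem hA.eigenvectorUnitary.2

lemma IsHermitian.abs_inv_add_smul_one_apply_le (hA : A.IsHermitian) {s c : ℝ} (hc : 0 < c)
    (hcs : ∀ i, c ≤ hA.eigenvalues i + s) (a b : n) :
    |(A + s • (1 : Matrix n n ℝ))⁻¹ a b| ≤ Fintype.card n * c⁻¹ := by
  have hU := hA.eigenvectorUnitary.2
  rw [hA.inv_add_smul_one_eq fun i => ((hc.trans_le (hcs i)).ne'), mul_apply]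
  calc _ ≤ ∑ _x : n, c⁻¹ := by
        refine (Finset.abs_sum_le_sum_abs _ _).trans (Finset.sum_le_sum fun x _ => ?_)
        have hx : 0 < hA.eigenvalues x + s := hc.trans_le (hcs x)
        rw [mul_diagonal, star_apply, star_trivial, abs_mul, abs_mul, abs_inv, abs_of_pos hx]
        calc _ ≤ 1 * (hA.eigenvalues x + s)⁻¹ * 1 := by
              gcongr
              exacts [entry_norm_bound_of_unitary hU a x, entry_norm_bound_of_unitary hU b x]
          _ ≤ c⁻¹ := by rw [one_mul, mul_one]; exact inv_anti₀ hc (hcs x)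
    _ = Fintype.card n * c⁻¹ := by rw [Finset.sum_const, Finset.card_univ, nsmul_eq_mul]

lemma PosDef.exists_pos_le_eigenvalues [Nonempty n] (hA : A.PosDef) :
    ∃ ε > 0, ∀ i, ε ≤ hA.1.eigenvalues i := by
  obtain ⟨i₀, hi₀⟩ := Finite.exists_min hA.1.eigenvalues
  exact ⟨_, hA.eigenvalues_pos i₀, hi₀⟩

lemma IsHermitian.pow_card_le_det_add_smul_one (hA : A.IsHermitian) {s ε : ℝ}
    (hεA : ∀ i, ε ≤ hA.eigenvalues i) (hs : 0 ≤ s + ε) :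
    (s + ε) ^ Fintype.card n ≤ (A + s • (1 : Matrix n n ℝ)).det := by
  rw [hA.det_add_smul_one, ← Finset.card_univ, ← Finset.prod_const]
  exact Finset.prod_le_prod (fun _ _ => hs) fun i _ => by linarith [hεA i]

lemma PosDef.det_add_smul_one_pos (hA : A.PosDef) {s : ℝ} (hs : 0 ≤ s) :
    0 < (A + s • (1 : Matrix n n ℝ)).det := by
  rw [hA.1.det_add_smul_one]
  exact Finset.prod_pos fun i _ => add_pos_of_pos_of_nonneg (hA.eigenvalues_pos i) hs

end Matrix

-- Declared through `inferInstanceAs` so that the induced topology is reducibly `Matrix`'s;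
-- `Matrix.normedAddCommGroup` as a local instance does not unify with it.
instance : NormedAddCommGroup Mat3 := inferInstanceAs (NormedAddCommGroup (Fin 3 → Fin 3 → ℝ))
noncomputable instance : NormedSpace ℝ Mat3 := inferInstanceAs (NormedSpace ℝ (Fin 3 → Fin 3 → ℝ))

lemma Mat3.integral_apply {X : Type*} [MeasurableSpace X] {μ : Measure X} {F : X → Mat3}
    (hF : Integrable F μ) (i j : Fin 3) : (∫ x, F x ∂μ) i j = ∫ x, F x i j ∂μ :=
  ((entryLinearMap ℝ ℝ i j).toContinuousLinearMap.integral_comp_comm hF).symm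

lemma Tens4.integral_apply {X : Type*} [MeasurableSpace X] {μ : Measure X} {F : X → Tens4}
    (hF : Integrable F μ) (i j k l : Fin 3) : (∫ x, F x ∂μ) i j k l = ∫ x, F x i j k l ∂μ := by
  rw [eval_integral hF.eval, eval_integral (hF.eval i).eval,
    eval_integral ((hF.eval i).eval j).eval, eval_integral (((hF.eval i).eval j).eval k).eval]

lemma norm_symmetrize_le (T : Tens4) : ‖symmetrize T‖ ≤ ‖T‖ := by
  have hT (a b c d : Fin 3) : ‖T a b c d‖ ≤ ‖T‖ := ((norm_le_pi_norm _ d).trans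
    ((norm_le_pi_norm _ c).trans ((norm_le_pi_norm _ b).trans (norm_le_pi_norm T a))))
  refine pi_norm_le_iff_of_nonneg (norm_nonneg T) |>.2 fun i =>
    pi_norm_le_iff_of_nonneg (norm_nonneg T) |>.2 fun j =>
    pi_norm_le_iff_of_nonneg (norm_nonneg T) |>.2 fun k =>
    pi_norm_le_iff_of_nonneg (norm_nonneg T) |>.2 fun l => ?_
  rw [symmetrize, norm_div, Real.norm_ofNat, div_le_iff₀ (by norm_num)]
  calc _ ≤ ∑ _σ : Equiv.Perm (Fin 4), ‖T‖ := norm_sum_le_of_le _ fun σ _ => hT _ _ _ _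
    _ = ‖T‖ * 24 := by simp [Fintype.card_perm, Nat.factorial, mul_comm]

lemma norm_otimes_le (K L : Mat3) : ‖otimes K L‖ ≤ ‖K‖ * ‖L‖ := by
  have h := mul_nonneg (norm_nonneg K) (norm_nonneg L)
  refine pi_norm_le_iff_of_nonneg h |>.2 fun i => pi_norm_le_iff_of_nonneg h |>.2 fun j =>
    pi_norm_le_iff_of_nonneg h |>.2 fun k => pi_norm_le_iff_of_nonneg h |>.2 fun l => ?_
  rw [otimes, norm_mul]
  exact mul_le_mul (norm_entry_le_entrywise_sup_norm K) (norm_entry_le_entrywise_sup_norm L)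
    (norm_nonneg _) (norm_nonneg _)

noncomputable def invSqrtDet (B : Mat3) (s : ℝ) : ℝ := (Real.sqrt (B + s • (1 : Mat3)).det)⁻¹

lemma invSqrtDet_nonneg (B : Mat3) (s : ℝ) : 0 ≤ invSqrtDet B s :=
  inv_nonneg.2 (Real.sqrt_nonneg _)

section Bounds

variable {B : Mat3} {s : ℝ}

lemma invSqrtDet_le (hB : B.IsHermitian) {ε : ℝ} (hε : 0 < ε) (hεB : ∀ i, ε ≤ hB.eigenvalues i)
    (hs : 0 ≤ s) : invSqrtDet B s ≤ (s + ε) ^ (-(3 / 2) : ℝ) := by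
  have h := hB.pow_card_le_det_add_smul_one (s := s) hεB (by positivity)
  rw [Fintype.card_fin] at h
  rw [invSqrtDet, Real.sqrt_eq_rpow, ← Real.rpow_neg ((by positivity : (0 : ℝ) ≤ _).trans h)]
  calc _ ≤ ((s + ε) ^ 3) ^ (-(1 / 2) : ℝ) :=
        Real.rpow_le_rpow_of_nonpos (by positivity) h (by norm_num)
    _ = (s + ε) ^ (-(3 / 2) : ℝ) := by
        rw [← Real.rpow_natCast, ← Real.rpow_mul (by positivity)]; norm_num

lemma norm_res_le (hB : B.IsHermitian) {ε : ℝ} (hε : 0 < ε) (hεB : ∀ i, ε ≤ hB.eigenvalues i)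
    (hs : 0 ≤ s) : ‖res B s‖ ≤ 3 * (s + ε) ^ (-1 : ℝ) := by
  refine (norm_le_iff (by positivity)).2 fun a b => ?_
  rw [Real.rpow_neg_one, Real.norm_eq_abs, res]
  simpa using hB.abs_inv_add_smul_one_apply_le (by positivity) (fun i => by linarith [hεB i]) a b

lemma continuousOn_res (hB : B.PosDef) : ContinuousOn (res B) (Ici 0) := fun s hs =>
  have hinv : ContinuousAt Ring.inverse (B + s • (1 : Mat3)).det := by
    rw [Ring.inverse_eq_inv']; exact continuousAt_inv₀ (hB.det_add_smul_one_pos hs).ne'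
  ((continuousAt_matrix_inv _ hinv).comp (f := fun s : ℝ => B + s • (1 : Mat3))
    (by fun_prop)).continuousWithinAt

lemma continuousOn_invSqrtDet (hB : B.PosDef) : ContinuousOn (invSqrtDet B) (Ici 0) :=
  ContinuousOn.inv₀ (by fun_prop) fun _ hs => (Real.sqrt_pos.2 (hB.det_add_smul_one_pos hs)).ne'

end Bounds

lemma integrableOn_Ioi_of_norm_le_rpow {E : Type*} [NormedAddCommGroup E] {f : ℝ → E}
    {C ε p : ℝ} (hf : ContinuousOn f (Ioi 0)) (hε : 0 < ε) (hp : p < -1)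
    (hb : ∀ s ∈ Ioi (0 : ℝ), ‖f s‖ ≤ C * (s + ε) ^ p) : IntegrableOn f (Ioi 0) :=
  ((integrableOn_add_rpow_Ioi_of_lt hp (by linarith)).const_mul C).mono'
    (hf.aestronglyMeasurable measurableSet_Ioi) (ae_restrict_of_forall_mem measurableSet_Ioi hb)

section Integrability

variable {B : Mat3}

lemma exists_invSqrtDet_le_and_norm_res_le (hB : B.PosDef) : ∃ ε > 0, ∀ s : ℝ, 0 ≤ s →
    invSqrtDet B s ≤ (s + ε) ^ (-(3 / 2) : ℝ) ∧ ‖res B s‖ ≤ 3 * (s + ε) ^ (-1 : ℝ) := by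
  obtain ⟨ε, hε, hεB⟩ := hB.exists_pos_le_eigenvalues
  exact ⟨ε, hε, fun s hs => ⟨invSqrtDet_le hB.1 hε hεB hs, norm_res_le hB.1 hε hεB hs⟩⟩

lemma integrableOn_invSqrtDet_smul_res (hB : B.PosDef) :
    IntegrableOn (fun s => invSqrtDet B s • res B s) (Ioi 0) := by
  obtain ⟨ε, hε, hb⟩ := exists_invSqrtDet_le_and_norm_res_le hB
  refine integrableOn_Ioi_of_norm_le_rpow (C := 3) (p := -(5 / 2))
    (((continuousOn_invSqrtDet hB).smul (continuousOn_res hB)).mono Ioi_subset_Ici_self) hε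
    (by norm_num) fun s hs => ?_
  have hu : 0 < s + ε := by linarith [mem_Ioi.mp hs]
  obtain ⟨hw, hR⟩ := hb s (le_of_lt hs)
  calc ‖invSqrtDet B s • res B s‖ = invSqrtDet B s * ‖res B s‖ := by
        rw [norm_smul, Real.norm_of_nonneg (invSqrtDet_nonneg B s)]
    _ ≤ (s + ε) ^ (-(3 / 2) : ℝ) * (3 * (s + ε) ^ (-1 : ℝ)) := by gcongr
    _ = 3 * (s + ε) ^ (-(5 / 2) : ℝ) := by
        rw [mul_left_comm, ← Real.rpow_add hu]; norm_num

lemma integrableOn_pow_mul_invSqrtDet_smul_symmetrize (hB : B.PosDef) {k : ℕ} (hk : k ≤ 2) :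
    IntegrableOn (fun s => (s ^ k * invSqrtDet B s) • symmetrize (otimes (res B s) (res B s)))
      (Ioi 0) := by
  obtain ⟨ε, hε, hb⟩ := exists_invSqrtDet_le_and_norm_res_le hB
  have hcont : ContinuousOn (fun s => symmetrize (otimes (res B s) (res B s))) (Ici 0) :=
    (show Continuous fun R : Mat3 => symmetrize (otimes R R) by
      unfold symmetrize otimes; fun_prop).comp_continuousOn (continuousOn_res hB)
  have hp : (k : ℝ) - 7 / 2 < -1 := by
    have : (k : ℝ) ≤ 2 := by exact_mod_cast hk
    linarith
  refine integrableOn_Ioi_of_norm_le_rpow (C := 9)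
    ((((continuous_pow k).continuousOn.mul (continuousOn_invSqrtDet hB)).smul hcont).mono
      Ioi_subset_Ici_self) hε hp fun s hs => ?_
  have hs0 : 0 ≤ s := le_of_lt hs
  have hu : 0 < s + ε := by linarith
  obtain ⟨hw, hR⟩ := hb s hs0
  have hS := (norm_symmetrize_le _).trans (norm_otimes_le (res B s) (res B s))
  calc _ = s ^ k * invSqrtDet B s * ‖symmetrize (otimes (res B s) (res B s))‖ := by
        rw [norm_smul, Real.norm_of_nonneg (by have := invSqrtDet_nonneg B s; positivity)]
    _ ≤ (s + ε) ^ (k : ℝ) * (s + ε) ^ (-(3 / 2) : ℝ)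
          * ((3 * (s + ε) ^ (-1 : ℝ)) * (3 * (s + ε) ^ (-1 : ℝ))) := by
        rw [Real.rpow_natCast]
        gcongr
        · exact invSqrtDet_nonneg B s
        · linarith
        · exact hS.trans (by gcongr)
    _ = 9 * (s + ε) ^ ((k : ℝ) - 7 / 2) := by
        rw [show (k : ℝ) - 7 / 2 = k + -(3 / 2) + -1 + -1 by ring, Real.rpow_add hu,
          Real.rpow_add hu, Real.rpow_add hu]
        ring

end Integrability

noncomputable def contrCLM (N : Mat3) : Tens4 →L[ℝ] Mat3 :=
  LinearMap.toContinuousLinearMap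
    { toFun := fun T => contr T N
      map_add' := fun T T' => by ext i j; simp [contr, add_mul, Finset.sum_add_distrib]
      map_smul' := fun c T => by ext i j; simp [contr, Finset.mul_sum, mul_assoc] }

@[simp] lemma contrCLM_apply (N : Mat3) (T : Tens4) : contrCLM N T = contr T N := rfl

noncomputable def traceSMulAddMulAddMulTransposeCLM (M : Mat3) : Mat3 →L[ℝ] Mat3 :=
  LinearMap.toContinuousLinearMap
    (M.trace • LinearMap.id + LinearMap.mulLeft ℝ M + LinearMap.mulRight ℝ Mᵀ)

@[simp] lemma traceSMulAddMulAddMulTransposeCLM_apply (M X : Mat3) :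
    traceSMulAddMulAddMulTransposeCLM M X = M.trace • X + M * X + X * Mᵀ := rfl

section IntegralRepresentation

variable {B : Mat3}

lemma Amat_eq_integral (h : IntegrableOn (fun s => invSqrtDet B s • res B s) (Ioi 0)) :
    Amat B = ∫ s in Ioi 0, (1 / 2 : ℝ) • invSqrtDet B s • res B s := by
  ext i j
  rw [Mat3.integral_apply (h.fun_smul _), Amat, of_apply, ← integral_const_mul]
  simp [invSqrtDet, div_eq_inv_mul]

lemma Ctens_eq_integral
    (h : IntegrableOn (fun s => invSqrtDet B s • symmetrize (otimes (res B s) (res B s))) (Ioi 0)) :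
    Ctens B = ∫ s in Ioi 0,
      (3 / 4 : ℝ) • invSqrtDet B s • symmetrize (otimes (res B s) (res B s)) := by
  ext i j k l
  rw [Tens4.integral_apply (h.fun_smul _), Ctens, ← integral_const_mul]
  simp [invSqrtDet, div_eq_inv_mul]

lemma Atens_eq_integral
    (h : IntegrableOn (fun s => (s * invSqrtDet B s) • symmetrize (otimes (res B s) (res B s)))
      (Ioi 0)) :
    Atens B = ∫ s in Ioi 0,
      (3 / 4 : ℝ) • (s * invSqrtDet B s) • symmetrize (otimes (res B s) (res B s)) := by
  ext i j k l
  rw [Tens4.integral_apply (h.fun_smul _), Atens, ← integral_const_mul]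
  simp only [invSqrtDet, Pi.smul_apply, smul_eq_mul]
  congr 1; ext s; ring

end IntegralRepresentation

lemma integrand_Ctens_contract_eq {B : Mat3} (hB : B.PosDef) (M : Mat3) {s : ℝ} (hs : 0 < s) :
    contrCLM (B * M + Mᵀ * B)
        ((3 / 4 : ℝ) • invSqrtDet B s • symmetrize (otimes (res B s) (res B s)))
      = traceSMulAddMulAddMulTransposeCLM M ((1 / 2 : ℝ) • invSqrtDet B s • res B s)
        - (2 : ℝ) • contrCLM M
          ((3 / 4 : ℝ) • (s * invSqrtDet B s) • symmetrize (otimes (res B s) (res B s))) := by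
  have key := contr_symmetrize_otimes_res (isHermitian_iff_isSymm.1 hB.1)
    (hB.det_add_smul_one_pos hs.le).ne'.isUnit M
  simp only [map_smul, contrCLM_apply, traceSMulAddMulAddMulTransposeCLM_apply]
  rw [eq_sub_of_add_eq key]
  module

theorem Ctens_contract_eq (B : Mat3) (hB : B.PosDef) (M : Mat3) :
    contr (Ctens B) (B * M + Mᵀ * B)
      = M.trace • Amat B + M * Amat B + Amat B * Mᵀ - (2 : ℝ) • contr (Atens B) M := by
  set S := fun s => symmetrize (otimes (res B s) (res B s))
  set Φ := traceSMulAddMulAddMulTransposeCLM M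
  have hA := integrableOn_invSqrtDet_smul_res hB
  have hC : IntegrableOn (fun s => invSqrtDet B s • S s) (Ioi 0) := by
    simpa using integrableOn_pow_mul_invSqrtDet_smul_symmetrize hB (k := 0) (by norm_num)
  have hAt : IntegrableOn (fun s => (s * invSqrtDet B s) • S s) (Ioi 0) := by
    simpa using integrableOn_pow_mul_invSqrtDet_smul_symmetrize hB (k := 1) (by norm_num)
  calc contr (Ctens B) (B * M + Mᵀ * B)
      = contrCLM (B * M + Mᵀ * B) (∫ s in Ioi 0, (3 / 4 : ℝ) • invSqrtDet B s • S s) := by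
        rw [Ctens_eq_integral hC, contrCLM_apply]
    _ = ∫ s in Ioi 0, contrCLM (B * M + Mᵀ * B) ((3 / 4 : ℝ) • invSqrtDet B s • S s) :=
        ((contrCLM _).integral_comp_comm (hC.fun_smul _)).symm
    _ = ∫ s in Ioi 0, (Φ ((1 / 2 : ℝ) • invSqrtDet B s • res B s)
          - (2 : ℝ) • contrCLM M ((3 / 4 : ℝ) • (s * invSqrtDet B s) • S s)) :=
        setIntegral_congr_fun measurableSet_Ioi fun s hs => integrand_Ctens_contract_eq hB M hs
    _ = Φ (∫ s in Ioi 0, (1 / 2 : ℝ) • invSqrtDet B s • res B s)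
          - (2 : ℝ) • contrCLM M (∫ s in Ioi 0, (3 / 4 : ℝ) • (s * invSqrtDet B s) • S s) := by
        rw [integral_sub (Φ.integrable_comp (hA.fun_smul _))
          (((contrCLM M).integrable_comp (hAt.fun_smul _)).fun_smul _), integral_smul,
          Φ.integral_comp_comm (hA.fun_smul _), (contrCLM M).integral_comp_comm (hAt.fun_smul _)]
    _ = _ := by rw [← Amat_eq_integral hA, ← Atens_eq_integral hAt]; rfl
end

section
/- Let b₀, b₃ > 0 with b₀ ≠ b₃, and for each integer n ≥ 1 let ℐ_n = ∫₀^∞ ds/((b₀+s)ⁿ·√(b₃+s)). Then for every n ≥ 1, ℐ_{n+1} = ((2n−1)/(2n·(b₀−b₃)))·ℐ_n − √(b₃)/(n·b₀ⁿ·(b₀−b₃)). -/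
/-! The derivative of `√(b₃ + s) / (b₀ + s) ^ n` is
`n (b₀ - b₃) / ((b₀ + s) ^ (n + 1) √(b₃ + s)) - (2n - 1) / (2 (b₀ + s) ^ n √(b₃ + s))`
(write `b₃ + s = (b₀ + s) - (b₀ - b₃)` in the numerator). The function equals `√b₃ / b₀ ^ n` at
`0` and tends to `0` at infinity, so integrating this derivative over `(0, ∞)` gives a linear
relation between `ℐ_{n+1}` and `ℐ_n`. -/

open MeasureTheory Set Filter Topology

lemma integrableOn_Ioi_one_div_pow_mul_sqrt {b₀ b₃ : ℝ} (h₀ : 0 < b₀) (h₃ : 0 < b₃) {n : ℕ}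
    (hn : 1 ≤ n) :
    IntegrableOn (fun s => 1 / ((b₀ + s) ^ n * √(b₃ + s))) (Ioi 0) := by
  have hcont : ContinuousOn (fun s => 1 / ((b₀ + s) ^ n * √(b₃ + s))) (Ici 0) := by
    refine continuousOn_const.div (by fun_prop) fun s (hs : 0 ≤ s) => ?_
    have : 0 < b₃ + s := by linarith
    have : 0 < b₀ + s := by linarith
    positivity
  rw [← Ioc_union_Ioi_eq_Ioi zero_le_one, integrableOn_union]
  refine ⟨((hcont.mono Icc_subset_Ici_self).integrableOn_compact isCompact_Icc).mono_set
    Ioc_subset_Icc_self, ?_⟩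
  refine (integrableOn_Ioi_rpow_of_lt (by norm_num : (-3 / 2 : ℝ) < -1) one_pos).mono'
    ((hcont.mono (Ioi_subset_Ici zero_le_one)).aestronglyMeasurable measurableSet_Ioi) ?_
  filter_upwards [ae_restrict_mem measurableSet_Ioi] with s (hs : 1 < s)
  have hs0 : 0 < s := one_pos.trans hs
  have hbound : s * √s ≤ (b₀ + s) ^ n * √(b₃ + s) := by
    gcongr
    · calc s ≤ b₀ + s := by linarith
        _ ≤ (b₀ + s) ^ n := le_self_pow₀ (by linarith) (by omega)
    · linarith
  have hrpow : s ^ (-3 / 2 : ℝ) = 1 / (s * √s) := by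
    rw [show (-3 / 2 : ℝ) = -(1 + 1 / 2) by norm_num, Real.rpow_neg hs0.le,
      Real.rpow_add hs0, Real.rpow_one, Real.sqrt_eq_rpow, one_div, one_div]
  rw [Real.norm_of_nonneg (by positivity), hrpow]
  exact one_div_le_one_div_of_le (by positivity) hbound

lemma hasDerivAt_sqrt_add_div_pow_add {b₀ b₃ s : ℝ} (hb₀ : 0 < b₀ + s) (hb₃ : 0 < b₃ + s) (n : ℕ) :
    HasDerivAt (fun t => √(b₃ + t) / (b₀ + t) ^ n)
      (n * (b₀ - b₃) * (1 / ((b₀ + s) ^ (n + 1) * √(b₃ + s)))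
        - (2 * n - 1) / 2 * (1 / ((b₀ + s) ^ n * √(b₃ + s)))) s := by
  have hsqrt : HasDerivAt (fun t => √(b₃ + t)) (1 / (2 * √(b₃ + s))) s := by
    simpa using ((hasDerivAt_id s).const_add b₃).sqrt hb₃.ne'
  have hpow : HasDerivAt (fun t => (b₀ + t) ^ n) (n * (b₀ + s) ^ (n - 1)) s := by
    simpa using ((hasDerivAt_id s).const_add b₀).fun_pow n
  refine (hsqrt.fun_div hpow (pow_ne_zero n hb₀.ne')).congr_deriv ?_
  have hq := Real.sq_sqrt hb₃.le
  have hq0 := (Real.sqrt_pos.mpr hb₃).ne'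
  have hb₀' := hb₀.ne'
  rcases n with _ | n
  · field_simp
    ring
  · simp only [Nat.add_sub_cancel, Nat.cast_add, Nat.cast_one, pow_succ]
    field_simp
    linear_combination -2 * ((n : ℝ) + 1) * hq

lemma tendsto_sqrt_add_div_pow_add_atTop (b₀ b₃ : ℝ) {n : ℕ} (hn : 1 ≤ n) :
    Tendsto (fun t => √(b₃ + t) / (b₀ + t) ^ n) atTop (𝓝 0) := by
  have hlim : Tendsto (fun t => 2 / √(b₃ + t)) atTop (𝓝 0) :=
    (Real.tendsto_sqrt_atTop.comp
      (tendsto_atTop_add_const_left atTop b₃ tendsto_id)).const_div_atTop 2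
  refine squeeze_zero' ?_ ?_ hlim
  · filter_upwards [eventually_ge_atTop (-b₀)] with t ht
    have : 0 ≤ b₀ + t := by linarith
    positivity
  filter_upwards [eventually_ge_atTop (max (b₃ - 2 * b₀) (max (1 - b₀) (1 - b₃)))] with t ht
  obtain ⟨ht₀, ht₁, ht₃⟩ : b₃ - 2 * b₀ ≤ t ∧ 1 - b₀ ≤ t ∧ 1 - b₃ ≤ t := by
    simpa only [max_le_iff] using ht
  have hb₃ : 0 < b₃ + t := by linarith
  have hpow : (b₃ + t) / 2 ≤ (b₀ + t) ^ n :=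
    calc (b₃ + t) / 2 ≤ b₀ + t := by linarith
      _ ≤ (b₀ + t) ^ n := le_self_pow₀ (by linarith) (by omega)
  calc √(b₃ + t) / (b₀ + t) ^ n ≤ √(b₃ + t) / ((b₃ + t) / 2) := by gcongr
    _ = 2 / √(b₃ + t) := by
      have hq := Real.sq_sqrt hb₃.le
      have hq0 := (Real.sqrt_pos.mpr hb₃).ne'
      field_simp
      rw [hq]

theorem integral_Ioi_one_div_pow_mul_sqrt_recursion {b₀ b₃ : ℝ} (h₀ : 0 < b₀) (h₃ : 0 < b₃)
    {n : ℕ} (hn : 1 ≤ n) :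
    n * (b₀ - b₃) * (∫ s in Ioi 0, 1 / ((b₀ + s) ^ (n + 1) * √(b₃ + s)))
      - (2 * n - 1) / 2 * (∫ s in Ioi 0, 1 / ((b₀ + s) ^ n * √(b₃ + s)))
      = -(√b₃ / b₀ ^ n) := by
  have hint_succ := integrableOn_Ioi_one_div_pow_mul_sqrt h₀ h₃ (Nat.le_succ_of_le hn)
  have hint := integrableOn_Ioi_one_div_pow_mul_sqrt h₀ h₃ hn
  have hftc := integral_Ioi_of_hasDerivAt_of_tendsto'
    (fun s (hs : 0 ≤ s) => hasDerivAt_sqrt_add_div_pow_add (by linarith) (by linarith) n)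
    ((hint_succ.const_mul _).sub (hint.const_mul _))
    (tendsto_sqrt_add_div_pow_add_atTop b₀ b₃ hn)
  rw [integral_sub (hint_succ.const_mul _) (hint.const_mul _), integral_const_mul,
    integral_const_mul] at hftc
  simpa using hftc

theorem In_recursion (b₀ b₃ : ℝ) (h₀ : 0 < b₀) (h₃ : 0 < b₃) (hne : b₀ ≠ b₃)
    (I : ℕ → ℝ)
    (hI : ∀ n : ℕ, 1 ≤ n →
      I n = ∫ s in Set.Ioi (0 : ℝ), 1 / ((b₀ + s) ^ n * Real.sqrt (b₃ + s))) :
    ∀ n : ℕ, 1 ≤ n →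
      I (n + 1) = ((2 * (n : ℝ) - 1) / (2 * (n : ℝ) * (b₀ - b₃))) * I n
        - Real.sqrt b₃ / ((n : ℝ) * b₀ ^ n * (b₀ - b₃)) := by
  intro n hn
  have hrec := integral_Ioi_one_div_pow_mul_sqrt_recursion h₀ h₃ hn
  rw [← hI n hn, ← hI (n + 1) (by omega)] at hrec
  have hn₀ : (n : ℝ) ≠ 0 := by positivity
  have hb : b₀ - b₃ ≠ 0 := sub_ne_zero.mpr hne
  have : b₀ ^ n ≠ 0 := pow_ne_zero n h₀.ne'
  field_simp at hrec ⊢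
  linear_combination hrec
end
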